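/- arXiv:2405.18142 — 3 statements merged into one kernel-verified Lean document; each statement's English description precedes it below -/
import Mathlib

section
/- Let Φ_x ∈ ℝ^{(T+1)n×(T+1)n} and Φ_u ∈ ℝ^{(T+1)m×(T+1)n} be block lower triangular and satisfy the nominal SLS constraint (I − Z𝒜̂)Φ_x − Zℬ̂Φ_u = I. Then Φ_x is invertible; moreover, setting K = Φ_u Φ_x⁻¹, the matrix I − Z(𝒜̂ + ℬ̂K) is invertible, (I − Z(𝒜̂ + ℬ̂K))⁻¹ = Φ_x, and K(I − Z(𝒜̂ + ℬ̂K))⁻¹ = Φ_u. In other words, the state-feedback gain K = Φ_u Φ_x⁻¹ realizes exactly the closed-loop system responses Φ_x, Φ_u for the dynamics (𝒜̂, ℬ̂). -/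
open MeasureTheory Matrix
open scoped ENNReal

/-- The ℓ¹-norm of a vector. -/
noncomputable def l1norm {ι : Type*} [Fintype ι] (v : ι → ℝ) : ℝ := ∑ i, |v i|

/-- The induced ℓ¹-norm of a matrix (maximum absolute column sum). -/
noncomputable def matL1 {ι κ : Type*} [Fintype ι] [Fintype κ] (M : Matrix ι κ ℝ) : ℝ :=
  ⨆ j, ∑ i, |M i j|

/-- The Wasserstein-1 distance (w.r.t. the ℓ¹-norm): infimum over couplings of the expected
ℓ¹-distance. -/
noncomputable def wass {ι : Type*} [Fintype ι] (P Q : Measure (ι → ℝ)) : ℝ :=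
  sInf { r | ∃ π : Measure ((ι → ℝ) × (ι → ℝ)),
    IsProbabilityMeasure π ∧ π.map Prod.fst = P ∧ π.map Prod.snd = Q ∧
    r = ∫ p, l1norm (p.1 - p.2) ∂π }

/-- The uniform empirical measure `(1/N) ∑ᵢ δ_{a i}`. -/
noncomputable def emp {ι : Type*} [Fintype ι] {N : ℕ} (a : Fin N → (ι → ℝ)) :
    Measure (ι → ℝ) :=
  (N : ℝ≥0∞)⁻¹ • ∑ i, Measure.dirac (a i)

/-- The block-downshift matrix `Z`, with `n × n` identity blocks on the first block
subdiagonal and zero blocks elsewhere. -/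
noncomputable def dshift (T n : ℕ) : Matrix (Fin (T+1) × Fin n) (Fin (T+1) × Fin n) ℝ :=
  fun p q => if (p.1 : ℕ) = (q.1 : ℕ) + 1 ∧ p.2 = q.2 then 1 else 0

/-- `blkdiag T M`: block-diagonal matrix with `T+1` copies of `M` on the diagonal. -/
noncomputable def blkdiag (T : ℕ) {n m : ℕ} (M : Matrix (Fin n) (Fin m) ℝ) :
    Matrix (Fin (T+1) × Fin n) (Fin (T+1) × Fin m) ℝ :=
  fun p q => if p.1 = q.1 then M p.2 q.2 else 0

/-- A block-partitioned matrix is block lower triangular: all blocks strictly above the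
block diagonal are zero. -/
def BlockLT {T n m : ℕ} (M : Matrix (Fin (T+1) × Fin m) (Fin (T+1) × Fin n) ℝ) : Prop :=
  ∀ p q, p.1 < q.1 → M p q = 0

/-! `Z` lowers the block index by one while `𝒜̂, ℬ̂` preserve it, so the constraint
writes `Φx = 1 + N` with `N = Z(𝒜̂Φx + ℬ̂Φu)` strictly block lower triangular, hence nilpotent;
thus `Φx` is invertible. Then `KΦx = Φu`, and substituting this into the constraint gives
`(I − Z(𝒜̂ + ℬ̂K))Φx = I`. -/

theorem pow_apply_eq_zero_of_apply_eq_zero_of_le {ι R : Type*} [Fintype ι] [DecidableEq ι]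
    [Semiring R] {M : Matrix ι ι R} (b : ι → ℕ) (hM : ∀ i j, b i ≤ b j → M i j = 0) :
    ∀ (k : ℕ) (i j : ι), b i < b j + k → (M ^ k) i j = 0 := by
  intro k
  induction k with
  | zero =>
    intro i j hij
    exact one_apply_ne (by rintro rfl; omega)
  | succ k ih =>
    intro i j hij
    rw [pow_succ, mul_apply]
    refine Finset.sum_eq_zero fun l _ => ?_
    by_cases hlj : b l ≤ b j
    · rw [hM l j hlj, mul_zero]
    · rw [ih i l (by omega), zero_mul]

theorem isNilpotent_of_apply_eq_zero_of_le {ι R : Type*} [Fintype ι] [DecidableEq ι]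
    [Semiring R] {M : Matrix ι ι R} (b : ι → ℕ) {k : ℕ} (hb : ∀ i, b i < k)
    (hM : ∀ i j, b i ≤ b j → M i j = 0) : IsNilpotent M :=
  ⟨k, ext fun i j => pow_apply_eq_zero_of_apply_eq_zero_of_le b hM k i j (by have := hb i; omega)⟩

namespace BlockLT

variable {T n m l : ℕ}

theorem add {M N : Matrix (Fin (T+1) × Fin m) (Fin (T+1) × Fin n) ℝ} (hM : BlockLT M)
    (hN : BlockLT N) : BlockLT (M + N) := fun p q hpq => by
  rw [Matrix.add_apply, hM p q hpq, hN p q hpq, add_zero]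

theorem blkdiag_mul (A : Matrix (Fin l) (Fin m) ℝ)
    {M : Matrix (Fin (T+1) × Fin m) (Fin (T+1) × Fin n) ℝ} (hM : BlockLT M) :
    BlockLT (blkdiag T A * M) := fun p q hpq => by
  rw [mul_apply]
  refine Finset.sum_eq_zero fun r _ => ?_
  by_cases h : p.1 = r.1
  · rw [hM r q (h ▸ hpq), mul_zero]
  · simp [blkdiag, h]

theorem dshift_mul_apply_eq_zero {M : Matrix (Fin (T+1) × Fin m) (Fin (T+1) × Fin n) ℝ}
    (hM : BlockLT M) {p : Fin (T+1) × Fin m} {q : Fin (T+1) × Fin n} (hpq : p.1 ≤ q.1) :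
    (dshift T m * M) p q = 0 := by
  rw [mul_apply]
  refine Finset.sum_eq_zero fun r _ => ?_
  by_cases h : (p.1 : ℕ) = r.1 + 1 ∧ p.2 = r.2
  · rw [hM r q (Fin.lt_def.mpr (by have := Fin.le_iff_val_le_val.mp hpq; omega)),
      mul_zero]
  · simp [dshift, h]

theorem isUnit_one_add_dshift_mul {M : Matrix (Fin (T+1) × Fin n) (Fin (T+1) × Fin n) ℝ}
    (hM : BlockLT M) : IsUnit (1 + dshift T n * M) := by
  have hN : IsNilpotent (dshift T n * M) :=
    isNilpotent_of_apply_eq_zero_of_le (fun p => (p.1 : ℕ)) (fun p => p.1.isLt)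
      fun _ _ hpq => hM.dshift_mul_apply_eq_zero hpq
  simpa using hN.neg.isUnit_one_sub

end BlockLT

theorem stmt0_general {n m T : ℕ}
    (Ahat : Matrix (Fin n) (Fin n) ℝ) (Bhat : Matrix (Fin n) (Fin m) ℝ)
    (Φx : Matrix (Fin (T+1) × Fin n) (Fin (T+1) × Fin n) ℝ)
    (Φu : Matrix (Fin (T+1) × Fin m) (Fin (T+1) × Fin n) ℝ)
    (hx : BlockLT Φx) (hu : BlockLT Φu)
    (hSLS : (1 - dshift T n * blkdiag T Ahat) * Φx - dshift T n * blkdiag T Bhat * Φu = 1)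
    (K : Matrix (Fin (T+1) × Fin m) (Fin (T+1) × Fin n) ℝ) (hK : K = Φu * Φx⁻¹) :
    IsUnit Φx ∧
    IsUnit (1 - dshift T n * (blkdiag T Ahat + blkdiag T Bhat * K)) ∧
    (1 - dshift T n * (blkdiag T Ahat + blkdiag T Bhat * K))⁻¹ = Φx ∧
    K * (1 - dshift T n * (blkdiag T Ahat + blkdiag T Bhat * K))⁻¹ = Φu := by
  have hΦx : Φx = 1 + dshift T n * (blkdiag T Ahat * Φx + blkdiag T Bhat * Φu) := by
    rw [Matrix.mul_add, ← Matrix.mul_assoc, ← Matrix.mul_assoc, ← hSLS, sub_mul, one_mul]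
    abel
  have hUx : IsUnit Φx := by
    rw [hΦx]
    exact ((hx.blkdiag_mul Ahat).add (hu.blkdiag_mul Bhat)).isUnit_one_add_dshift_mul
  have hdet : IsUnit Φx.det := (isUnit_iff_isUnit_det Φx).mp hUx
  have hKΦx : K * Φx = Φu := by rw [hK, nonsing_inv_mul_cancel_right Φx Φu hdet]
  have hloop : (1 - dshift T n * (blkdiag T Ahat + blkdiag T Bhat * K)) * Φx = 1 :=
    calc _ = (1 - dshift T n * blkdiag T Ahat) * Φx - dshift T n * blkdiag T Bhat * (K * Φx) := by
          noncomm_ring; simp only [Matrix.mul_assoc]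
      _ = 1 := by rw [hKΦx, hSLS]
  have hinv := inv_eq_right_inv hloop
  exact ⟨hUx, (isUnit_iff_isUnit_det _).mpr (isUnit_det_of_right_inverse hloop), hinv,
    by rw [hinv, hKΦx]⟩

/-- Block lower triangular `Φx, Φu` satisfying the nominal SLS constraint
`(I − Z𝒜̂)Φx − Zℬ̂Φu = I` yield an invertible `Φx`; the gain `K = Φu Φx⁻¹` realizes exactly
the closed-loop responses `Φx, Φu` for the nominal dynamics. -/
theorem stmt0 {n m T : ℕ} (hn : 0 < n) (hm : 0 < m) (hT : 0 < T)
    (Ahat : Matrix (Fin n) (Fin n) ℝ) (Bhat : Matrix (Fin n) (Fin m) ℝ)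
    (Φx : Matrix (Fin (T+1) × Fin n) (Fin (T+1) × Fin n) ℝ)
    (Φu : Matrix (Fin (T+1) × Fin m) (Fin (T+1) × Fin n) ℝ)
    (hx : BlockLT Φx) (hu : BlockLT Φu)
    (hSLS : (1 - dshift T n * blkdiag T Ahat) * Φx - dshift T n * blkdiag T Bhat * Φu = 1)
    (K : Matrix (Fin (T+1) × Fin m) (Fin (T+1) × Fin n) ℝ) (hK : K = Φu * Φx⁻¹) :
    IsUnit Φx ∧
    IsUnit (1 - dshift T n * (blkdiag T Ahat + blkdiag T Bhat * K)) ∧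
    (1 - dshift T n * (blkdiag T Ahat + blkdiag T Bhat * K))⁻¹ = Φx ∧
    K * (1 - dshift T n * (blkdiag T Ahat + blkdiag T Bhat * K))⁻¹ = Φu :=
  stmt0_general Ahat Bhat Φx Φu hx hu hSLS K hK
end

section
/- Let Φ_x, Φ_u be block lower triangular and satisfy the nominal SLS constraint (I − Z𝒜̂)Φ_x − Zℬ̂Φ_u = I, let Φ = [Φ_x; Φ_u], and let A ∈ ℝ^{n×n}, B ∈ ℝ^{n×m} be the true system matrices with ΔA = Â − A, ΔB = B̂ − B and Δℳ = [blkdiag_{T+1}(ΔA) blkdiag_{T+1}(ΔB)]. Set 𝒜 = blkdiag_{T+1}(A), ℬ = blkdiag_{T+1}(B) and K = Φ_u Φ_x⁻¹. Then for every w ∈ ℝ^{(T+1)n} there exists a unique pair (x, u) ∈ ℝ^{(T+1)n} × ℝ^{(T+1)m} satisfying the true closed-loop equations x = Z𝒜x + Zℬu + w and u = Kx, and it is given by [x; u] = (I + ΦZΔℳ)⁻¹ Φ w. -/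
open MeasureTheory Matrix
open scoped ENNReal

/-!
Every matrix involved is causal (block lower triangular in time) and `Z` delays by one step, so
`Φx = I + Z(𝒜̂Φx + ℬ̂Φu)` and `I + ΦZΔℳ` are unipotent, hence invertible. The SLS constraint
rewrites the true closed loop applied to the nominal response as
`(I - Z𝒜)Φx - ZℬΦu = I + ZΔℳΦ`. Writing a pair with `u = Kx` as `[x; u] = Φf` (with
`f = Φx⁻¹x`), the closed-loop equations become `(I + ZΔℳΦ)f = w`, and pushing `Φ` through gives
exactly `(I + ΦZΔℳ)[x; u] = Φw`.
-/

namespace Matrix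

variable {R ι κ ν : Type*}

/-- Entry `(i, j)` vanishes unless input time `σ j` lies at least `d` steps before output time
`τ i`: `d = 0` is causality, `d = 1` strict causality. -/
def HasDelay [Zero R] (τ : ι → ℕ) (σ : κ → ℕ) (d : ℕ) (M : Matrix ι κ R) : Prop :=
  ∀ i j, τ i < σ j + d → M i j = 0

namespace HasDelay

variable {τ : ι → ℕ} {σ : κ → ℕ} {d e : ℕ}

theorem add [AddZeroClass R] {M N : Matrix ι κ R} (hM : HasDelay τ σ d M)
    (hN : HasDelay τ σ d N) : HasDelay τ σ d (M + N) := fun i j h => by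
  rw [add_apply, hM i j h, hN i j h, add_zero]

theorem mul [NonUnitalNonAssocSemiring R] [Fintype κ] {ρ : ν → ℕ} {M : Matrix ι κ R}
    {N : Matrix κ ν R} (hM : HasDelay τ σ d M) (hN : HasDelay σ ρ e N) :
    HasDelay τ ρ (d + e) (M * N) := fun i k h =>
  Finset.sum_eq_zero fun j _ => by
    change M i j * N j k = 0
    by_cases hj : σ j < ρ k + e
    · rw [hN j k hj, mul_zero]
    · rw [hM i j (by omega), zero_mul]

theorem one [DecidableEq ι] [Zero R] [One R] : HasDelay τ τ 0 (1 : Matrix ι ι R) :=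
  fun i j h => one_apply_ne (by rintro rfl; omega)

theorem pow [Semiring R] [Fintype ι] [DecidableEq ι] {M : Matrix ι ι R}
    (hM : HasDelay τ τ d M) (k : ℕ) : HasDelay τ τ (k * d) (M ^ k) := by
  induction k with
  | zero => simpa using one
  | succ k ih => simpa [pow_succ, Nat.succ_mul] using ih.mul hM

theorem isNilpotent [Semiring R] [Fintype ι] [DecidableEq ι] {M : Matrix ι ι R}
    (hM : HasDelay τ τ 1 M) : IsNilpotent M := by
  refine ⟨Finset.univ.sup τ + 1, ?_⟩
  ext i j
  refine hM.pow _ i j ?_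
  have := Finset.le_sup (f := τ) (Finset.mem_univ i)
  omega

theorem isUnit_det_one_add [CommRing R] [Fintype ι] [DecidableEq ι] {M : Matrix ι ι R}
    (hM : HasDelay τ τ 1 M) : IsUnit (1 + M).det :=
  (isUnit_iff_isUnit_det _).mp hM.isNilpotent.isUnit_one_add

theorem fromRows [Zero R] {ι' : Type*} {τ' : ι' → ℕ} {M : Matrix ι κ R} {N : Matrix ι' κ R}
    (hM : HasDelay τ σ d M) (hN : HasDelay τ' σ d N) :
    HasDelay (Sum.elim τ τ') σ d (fromRows M N) := by
  rintro (i | i) j h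
  exacts [hM i j h, hN i j h]

theorem fromCols [Zero R] {κ' : Type*} {σ' : κ' → ℕ} {M : Matrix ι κ R} {N : Matrix ι κ' R}
    (hM : HasDelay τ σ d M) (hN : HasDelay τ σ' d N) :
    HasDelay τ (Sum.elim σ σ') d (fromCols M N) := by
  rintro i (j | j) h
  exacts [hM i j h, hN i j h]

end HasDelay

end Matrix

abbrev blockIndex {T : ℕ} {ι : Type*} (p : Fin (T + 1) × ι) : ℕ := p.1

theorem hasDelay_dshift (T n : ℕ) : HasDelay blockIndex blockIndex 1 (dshift T n) :=
  fun p q h => if_neg fun h' => by simp only [blockIndex] at h; omega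

theorem hasDelay_blkdiag (T : ℕ) {n m : ℕ} (M : Matrix (Fin n) (Fin m) ℝ) :
    HasDelay blockIndex blockIndex 0 (blkdiag T M) :=
  fun p q h => if_neg fun h' => by simp [h'] at h

theorem BlockLT.hasDelay {T n m : ℕ} {M : Matrix (Fin (T+1) × Fin m) (Fin (T+1) × Fin n) ℝ}
    (hM : BlockLT M) : HasDelay blockIndex blockIndex 0 M :=
  fun p q h => hM p q (by simpa using h)

theorem blkdiag_sub (T : ℕ) {n m : ℕ} (M N : Matrix (Fin n) (Fin m) ℝ) :
    blkdiag T (M - N) = blkdiag T M - blkdiag T N := by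
  ext p q
  simp only [blkdiag, Matrix.sub_apply]
  split <;> simp

section ClosedLoop

variable {R ι κ : Type*} [CommRing R] [Fintype ι] [Fintype κ] [DecidableEq ι]
  {Z Ahat A Φx : Matrix ι ι R} {Bhat B : Matrix ι κ R} {Φu : Matrix κ ι R}

theorem sub_sub_eq_one_add_of_sls (hSLS : (1 - Z * Ahat) * Φx - Z * Bhat * Φu = 1) :
    Φx - Z * A * Φx - Z * B * Φu = 1 + Z * fromCols (Ahat - A) (Bhat - B) * fromRows Φx Φu := by
  rw [Matrix.mul_assoc Z (fromCols _ _), fromCols_mul_fromRows, ← hSLS]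
  simp only [Matrix.sub_mul, Matrix.mul_sub, Matrix.mul_add, Matrix.one_mul, Matrix.mul_assoc]
  abel

theorem closedLoop_mulVec_iff (hSLS : (1 - Z * Ahat) * Φx - Z * Bhat * Φu = 1) (v w : ι → R) :
    Φx *ᵥ v = (Z * A) *ᵥ (Φx *ᵥ v) + (Z * B) *ᵥ (Φu *ᵥ v) + w ↔
      (1 + Z * fromCols (Ahat - A) (Bhat - B) * fromRows Φx Φu) *ᵥ v = w := by
  rw [← sub_sub_eq_one_add_of_sls hSLS, sub_mulVec, sub_mulVec, mulVec_mulVec, mulVec_mulVec,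
    Matrix.mul_assoc, Matrix.mul_assoc]
  constructor <;> intro h <;> linear_combination h

theorem closedLoop_iff [DecidableEq κ] (hSLS : (1 - Z * Ahat) * Φx - Z * Bhat * Φu = 1) (hΦx : IsUnit Φx.det)
    (x w : ι → R) (u : κ → R) :
    (x = (Z * A) *ᵥ x + (Z * B) *ᵥ u + w ∧ u = (Φu * Φx⁻¹) *ᵥ x) ↔
      (1 + fromRows Φx Φu * Z * fromCols (Ahat - A) (Bhat - B)) *ᵥ Sum.elim x u =
        fromRows Φx Φu *ᵥ w := by
  set Φ := fromRows Φx Φu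
  set ΔM := fromCols (Ahat - A) (Bhat - B)
  have pushThrough (v : ι → R) :
      (1 + Φ * Z * ΔM) *ᵥ (Φ *ᵥ v) = Φ *ᵥ ((1 + Z * ΔM * Φ) *ᵥ v) := by
    simp only [mulVec_mulVec, Matrix.mul_add, Matrix.add_mul, Matrix.mul_one, Matrix.one_mul,
      Matrix.mul_assoc]
  have sumElim_eq (v : ι → R) : Sum.elim x u = Φ *ᵥ v ↔ x = Φx *ᵥ v ∧ u = Φu *ᵥ v := by
    rw [fromRows_mulVec, Sum.elim_eq_iff]
  constructor
  · rintro ⟨hx, hu⟩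
    have hxΦ : x = Φx *ᵥ (Φx⁻¹ *ᵥ x) := by
      rw [mulVec_mulVec, mul_nonsing_inv _ hΦx, one_mulVec]
    have huΦ : u = Φu *ᵥ (Φx⁻¹ *ᵥ x) := by rw [hu, mulVec_mulVec]
    rw [(sumElim_eq _).mpr ⟨hxΦ, huΦ⟩, pushThrough,
      (closedLoop_mulVec_iff hSLS _ w).mp (by rwa [← hxΦ, ← huΦ])]
  · intro h
    set v := w - (Z * ΔM) *ᵥ Sum.elim x u
    have hz : Sum.elim x u = Φ *ᵥ v := by
      rw [mulVec_sub, ← h, mulVec_mulVec, add_mulVec, one_mulVec, Matrix.mul_assoc]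
      abel
    obtain ⟨hxv, huv⟩ := (sumElim_eq v).mp hz
    have hv : (1 + Z * ΔM * Φ) *ᵥ v = w := by
      rw [add_mulVec, one_mulVec, ← mulVec_mulVec, ← hz, sub_add_cancel]
    rw [hxv, huv]
    refine ⟨(closedLoop_mulVec_iff hSLS v w).mpr hv, ?_⟩
    rw [mulVec_mulVec, nonsing_inv_mul_cancel_right _ _ hΦx]

end ClosedLoop

section Causality

variable {T n m : ℕ} {Ahat : Matrix (Fin n) (Fin n) ℝ} {Bhat : Matrix (Fin n) (Fin m) ℝ}
  {Φx : Matrix (Fin (T+1) × Fin n) (Fin (T+1) × Fin n) ℝ}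
  {Φu : Matrix (Fin (T+1) × Fin m) (Fin (T+1) × Fin n) ℝ}

theorem isUnit_det_of_sls (hx : BlockLT Φx) (hu : BlockLT Φu)
    (hSLS : (1 - dshift T n * blkdiag T Ahat) * Φx - dshift T n * blkdiag T Bhat * Φu = 1) :
    IsUnit Φx.det := by
  have hΦx : Φx = 1 + dshift T n * (blkdiag T Ahat * Φx + blkdiag T Bhat * Φu) := by
    rw [← hSLS]
    simp only [Matrix.sub_mul, Matrix.one_mul, Matrix.mul_add, Matrix.mul_assoc]
    abel
  rw [hΦx]
  exact HasDelay.isUnit_det_one_add <| (hasDelay_dshift T n).mul <|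
    ((hasDelay_blkdiag T Ahat).mul hx.hasDelay).add ((hasDelay_blkdiag T Bhat).mul hu.hasDelay)

theorem isUnit_det_one_add_fromRows_mul_dshift_mul_fromCols (hx : BlockLT Φx) (hu : BlockLT Φu)
    (A : Matrix (Fin n) (Fin n) ℝ) (B : Matrix (Fin n) (Fin m) ℝ) :
    IsUnit (1 + fromRows Φx Φu * dshift T n * fromCols (blkdiag T A) (blkdiag T B)).det :=
  HasDelay.isUnit_det_one_add <|
    ((hx.hasDelay.fromRows hu.hasDelay).mul (hasDelay_dshift T n)).mul
      ((hasDelay_blkdiag T A).fromCols (hasDelay_blkdiag T B))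

end Causality

theorem stmt3_general {n m T : ℕ}
    (Ahat A : Matrix (Fin n) (Fin n) ℝ) (Bhat B : Matrix (Fin n) (Fin m) ℝ)
    (Φx : Matrix (Fin (T+1) × Fin n) (Fin (T+1) × Fin n) ℝ)
    (Φu : Matrix (Fin (T+1) × Fin m) (Fin (T+1) × Fin n) ℝ)
    (hx : BlockLT Φx) (hu : BlockLT Φu)
    (hSLS : (1 - dshift T n * blkdiag T Ahat) * Φx - dshift T n * blkdiag T Bhat * Φu = 1)
    (Φ : Matrix ((Fin (T+1) × Fin n) ⊕ (Fin (T+1) × Fin m)) (Fin (T+1) × Fin n) ℝ)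
    (hΦ : Φ = Matrix.fromRows Φx Φu)
    (ΔM : Matrix (Fin (T+1) × Fin n) ((Fin (T+1) × Fin n) ⊕ (Fin (T+1) × Fin m)) ℝ)
    (hΔM : ΔM = Matrix.fromCols (blkdiag T (Ahat - A)) (blkdiag T (Bhat - B)))
    (K : Matrix (Fin (T+1) × Fin m) (Fin (T+1) × Fin n) ℝ) (hK : K = Φu * Φx⁻¹)
    (w : (Fin (T+1) × Fin n) → ℝ)
    (y : ((Fin (T+1) × Fin n) ⊕ (Fin (T+1) × Fin m)) → ℝ)
    (hy : y = ((1 + Φ * dshift T n * ΔM)⁻¹ * Φ) *ᵥ w) :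
    (y ∘ Sum.inl = (dshift T n * blkdiag T A) *ᵥ (y ∘ Sum.inl)
        + (dshift T n * blkdiag T B) *ᵥ (y ∘ Sum.inr) + w
      ∧ y ∘ Sum.inr = K *ᵥ (y ∘ Sum.inl)) ∧
    (∀ (x : (Fin (T+1) × Fin n) → ℝ) (u : (Fin (T+1) × Fin m) → ℝ),
      (x = (dshift T n * blkdiag T A) *ᵥ x + (dshift T n * blkdiag T B) *ᵥ u + w
        ∧ u = K *ᵥ x) →
      x = y ∘ Sum.inl ∧ u = y ∘ Sum.inr) := by
  subst hΦ hΔM hK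
  have hΦx := isUnit_det_of_sls hx hu hSLS
  have hQ := isUnit_det_one_add_fromRows_mul_dshift_mul_fromCols hx hu (Ahat - A) (Bhat - B)
  have solution_iff (x u) : (x = (dshift T n * blkdiag T A) *ᵥ x +
      (dshift T n * blkdiag T B) *ᵥ u + w ∧ u = (Φu * Φx⁻¹) *ᵥ x) ↔ Sum.elim x u = y := by
    rw [closedLoop_iff hSLS hΦx, ← blkdiag_sub, ← blkdiag_sub, hy, ← mulVec_mulVec]
    constructor
    · intro h
      rw [← h, mulVec_mulVec, nonsing_inv_mul _ hQ, one_mulVec]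
    · intro h
      rw [h, mulVec_mulVec, mul_nonsing_inv _ hQ, one_mulVec]
  refine ⟨(solution_iff _ _).mpr (Sum.elim_comp_inl_inr y), fun x u hxu => ?_⟩
  rw [← (solution_iff x u).mp hxu]
  exact ⟨rfl, rfl⟩

/-- Under the nominal SLS constraint, for every disturbance `w` the true
closed-loop equations `x = Z𝒜x + Zℬu + w`, `u = Kx` (with `K = Φu Φx⁻¹`) have a unique
solution, given by `[x; u] = (I + ΦZΔℳ)⁻¹ Φ w`. -/
theorem stmt3 {n m T : ℕ} (hn : 0 < n) (hm : 0 < m) (hT : 0 < T)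
    (Ahat A : Matrix (Fin n) (Fin n) ℝ) (Bhat B : Matrix (Fin n) (Fin m) ℝ)
    (Φx : Matrix (Fin (T+1) × Fin n) (Fin (T+1) × Fin n) ℝ)
    (Φu : Matrix (Fin (T+1) × Fin m) (Fin (T+1) × Fin n) ℝ)
    (hx : BlockLT Φx) (hu : BlockLT Φu)
    (hSLS : (1 - dshift T n * blkdiag T Ahat) * Φx - dshift T n * blkdiag T Bhat * Φu = 1)
    (Φ : Matrix ((Fin (T+1) × Fin n) ⊕ (Fin (T+1) × Fin m)) (Fin (T+1) × Fin n) ℝ)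
    (hΦ : Φ = Matrix.fromRows Φx Φu)
    (ΔM : Matrix (Fin (T+1) × Fin n) ((Fin (T+1) × Fin n) ⊕ (Fin (T+1) × Fin m)) ℝ)
    (hΔM : ΔM = Matrix.fromCols (blkdiag T (Ahat - A)) (blkdiag T (Bhat - B)))
    (K : Matrix (Fin (T+1) × Fin m) (Fin (T+1) × Fin n) ℝ) (hK : K = Φu * Φx⁻¹)
    (w : (Fin (T+1) × Fin n) → ℝ)
    (y : ((Fin (T+1) × Fin n) ⊕ (Fin (T+1) × Fin m)) → ℝ)
    (hy : y = ((1 + Φ * dshift T n * ΔM)⁻¹ * Φ) *ᵥ w) :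
    (y ∘ Sum.inl = (dshift T n * blkdiag T A) *ᵥ (y ∘ Sum.inl)
        + (dshift T n * blkdiag T B) *ᵥ (y ∘ Sum.inr) + w
      ∧ y ∘ Sum.inr = K *ᵥ (y ∘ Sum.inl)) ∧
    (∀ (x : (Fin (T+1) × Fin n) → ℝ) (u : (Fin (T+1) × Fin m) → ℝ),
      (x = (dshift T n * blkdiag T A) *ᵥ x + (dshift T n * blkdiag T B) *ᵥ u + w
        ∧ u = K *ᵥ x) →
      x = y ∘ Sum.inl ∧ u = y ∘ Sum.inr) :=
  stmt3_general Ahat A Bhat B Φx Φu hx hu hSLS Φ hΦ ΔM hΔM K hK w y hy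
end

section
/- (Lemma 2, disturbance distribution uncertainty.) Fix x₀ ∈ ℝ^n and let P, Q be probability measures on ℝ^{(T+1)n} with finite first moments, both supported on the affine set S = { w ∈ ℝ^{(T+1)n} : the first n coordinates of w equal x₀ }. Then for every matrix M ∈ ℝ^{p×(T+1)n}, d_W(M#P, M#Q) ≤ ‖MZ‖ · d_W(P, Q), where Z is the block-downshift matrix and M#P denotes the pushforward of P under x ↦ Mx. In particular, with M = R_Φ Φ this gives d_W(R_ΦΦ#P, R_ΦΦ#Q) ≤ ‖R_Φ Φ Z‖ · d_W(P, Q). -/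
open MeasureTheory Matrix
open scoped ENNReal

/-!
For `w₁, w₂ ∈ S` the difference `v = w₁ - w₂` has zero first block, so `M v` only sees the
columns of `M` outside the first block; each of these is a column of `M Z`, whence
`‖M (w₁ - w₂)‖ ≤ ‖M Z‖ ‖w₁ - w₂‖`. Pushing any coupling of `P` and `Q` forward along
`v ↦ M v` gives a coupling of `M#P` and `M#Q` whose cost is at most `‖M Z‖` times the original
one, and taking the infimum over couplings proves the bound.
-/

section L1

variable {ι κ : Type*} [Fintype ι] [Fintype κ]

lemma l1norm_nonneg (v : ι → ℝ) : 0 ≤ l1norm v :=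
  Finset.sum_nonneg fun _ _ => abs_nonneg _

lemma continuous_l1norm : Continuous (l1norm : (ι → ℝ) → ℝ) :=
  continuous_finsetSum _ fun i _ => (continuous_apply i).abs

lemma l1norm_sub_le (a b : ι → ℝ) : l1norm (a - b) ≤ l1norm a + l1norm b := by
  rw [l1norm, l1norm, l1norm, ← Finset.sum_add_distrib]
  exact Finset.sum_le_sum fun i _ => abs_sub (a i) (b i)

lemma sum_abs_col_le_matL1 (A : Matrix κ ι ℝ) (j : ι) : ∑ i, |A i j| ≤ matL1 A :=
  le_ciSup (f := fun j => ∑ i, |A i j|) (Set.finite_range _).bddAbove j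

lemma matL1_nonneg (A : Matrix κ ι ℝ) : 0 ≤ matL1 A :=
  Real.iSup_nonneg fun _ => Finset.sum_nonneg fun _ _ => abs_nonneg _

lemma l1norm_mulVec_le_of_sum_abs_col_le (A : Matrix κ ι ℝ) (v : ι → ℝ) {C : ℝ}
    (hcol : ∀ j, v j ≠ 0 → ∑ i, |A i j| ≤ C) : l1norm (A *ᵥ v) ≤ C * l1norm v := by
  have hterm : ∀ j, (∑ i, |A i j|) * |v j| ≤ C * |v j| := fun j => by
    by_cases hv : v j = 0
    · simp [hv]
    · exact mul_le_mul_of_nonneg_right (hcol j hv) (abs_nonneg _)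
  calc l1norm (A *ᵥ v) = ∑ i, |∑ j, A i j * v j| := rfl
    _ ≤ ∑ i, ∑ j, |A i j * v j| :=
        Finset.sum_le_sum fun i _ => Finset.abs_sum_le_sum_abs _ _
    _ = ∑ j, (∑ i, |A i j|) * |v j| := by
        rw [Finset.sum_comm]; simp only [abs_mul, Finset.sum_mul]
    _ ≤ ∑ j, C * |v j| := Finset.sum_le_sum fun j _ => hterm j
    _ = C * l1norm v := by rw [l1norm, Finset.mul_sum]

end L1

section Shift

variable {T n : ℕ} {p : Type*}

lemma mul_dshift_apply_castSucc (M : Matrix p (Fin (T+1) × Fin n) ℝ) (i : p) (t : Fin T)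
    (k : Fin n) : (M * dshift T n) i (t.castSucc, k) = M i (t.succ, k) := by
  have hZ : ∀ q : Fin (T+1) × Fin n,
      dshift T n q (t.castSucc, k) = if q = (t.succ, k) then 1 else 0 := by
    rintro ⟨s, l⟩
    simp only [dshift, Prod.mk.injEq, Fin.ext_iff, Fin.val_castSucc, Fin.val_succ]
  simp [mul_apply, hZ]

lemma l1norm_mulVec_le_matL1_mul_dshift [Fintype p] (M : Matrix p (Fin (T+1) × Fin n) ℝ)
    (v : Fin (T+1) × Fin n → ℝ) (hv : ∀ k, v (0, k) = 0) :
    l1norm (M *ᵥ v) ≤ matL1 (M * dshift T n) * l1norm v := by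
  refine l1norm_mulVec_le_of_sum_abs_col_le M v fun ⟨s, k⟩ hsk => ?_
  have hs : s ≠ 0 := by rintro rfl; exact hsk (hv k)
  obtain ⟨t, rfl⟩ := Fin.exists_succ_eq_of_ne_zero hs
  simpa only [mul_dshift_apply_castSucc] using
    sum_abs_col_le_matL1 (M * dshift T n) (t.castSucc, k)

end Shift

section Coupling

variable {α β γ δ : Type*} [MeasurableSpace α] [MeasurableSpace β] [MeasurableSpace γ]
  [MeasurableSpace δ]

def IsCoupling (π : Measure (α × β)) (P : Measure α) (Q : Measure β) : Prop :=
  IsProbabilityMeasure π ∧ π.map Prod.fst = P ∧ π.map Prod.snd = Q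

lemma isCoupling_prod (P : Measure α) (Q : Measure β) [IsProbabilityMeasure P]
    [IsProbabilityMeasure Q] : IsCoupling (P.prod Q) P Q :=
  ⟨inferInstance, by simp [Measure.map_fst_prod], by simp [Measure.map_snd_prod]⟩

lemma IsCoupling.map {π : Measure (α × β)} {P : Measure α} {Q : Measure β}
    (hπ : IsCoupling π P Q) {f : α → γ} {g : β → δ} (hf : Measurable f) (hg : Measurable g) :
    IsCoupling (π.map (Prod.map f g)) (P.map f) (Q.map g) := by
  obtain ⟨hprob, hfst, hsnd⟩ := hπ
  refine ⟨Measure.isProbabilityMeasure_map (hf.prodMap hg).aemeasurable, ?_, ?_⟩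
  · rw [Measure.map_map measurable_fst (hf.prodMap hg), ← hfst,
      Measure.map_map hf measurable_fst]
    rfl
  · rw [Measure.map_map measurable_snd (hf.prodMap hg), ← hsnd,
      Measure.map_map hg measurable_snd]
    rfl

end Coupling

section Wasserstein

variable {ι κ : Type*} [Fintype ι] [Fintype κ]

lemma wass_eq (P Q : Measure (ι → ℝ)) :
    wass P Q = sInf {r | ∃ π, IsCoupling π P Q ∧ r = ∫ q, l1norm (q.1 - q.2) ∂π} := by
  simp only [wass, IsCoupling, and_assoc]

lemma IsCoupling.integrable_cost {π : Measure ((ι → ℝ) × (ι → ℝ))} {P Q : Measure (ι → ℝ)}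
    (hπ : IsCoupling π P Q) (hP : Integrable l1norm P) (hQ : Integrable l1norm Q) :
    Integrable (fun q => l1norm (q.1 - q.2)) π := by
  obtain ⟨_, rfl, rfl⟩ := hπ
  have h1 := (integrable_map_measure continuous_l1norm.aestronglyMeasurable
    measurable_fst.aemeasurable).mp hP
  have h2 := (integrable_map_measure continuous_l1norm.aestronglyMeasurable
    measurable_snd.aemeasurable).mp hQ
  refine (h1.add h2).mono'
    (continuous_l1norm.comp (continuous_fst.sub continuous_snd)).aestronglyMeasurable ?_
  filter_upwards with q
  rw [Real.norm_eq_abs, abs_of_nonneg (l1norm_nonneg _)]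
  exact l1norm_sub_le _ _

lemma wass_le_integral {π : Measure ((ι → ℝ) × (ι → ℝ))} {P Q : Measure (ι → ℝ)}
    (hπ : IsCoupling π P Q) : wass P Q ≤ ∫ q, l1norm (q.1 - q.2) ∂π := by
  rw [wass_eq]
  refine csInf_le ⟨0, ?_⟩ ⟨π, hπ, rfl⟩
  rintro r ⟨π', -, rfl⟩
  exact integral_nonneg fun q => l1norm_nonneg _

lemma le_mul_wass {P Q : Measure (ι → ℝ)} [IsProbabilityMeasure P] [IsProbabilityMeasure Q]
    {r C : ℝ} (hC : 0 ≤ C)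
    (h : ∀ π, IsCoupling π P Q → r ≤ C * ∫ q, l1norm (q.1 - q.2) ∂π) :
    r ≤ C * wass P Q := by
  rw [wass_eq, ← smul_eq_mul, ← Real.sInf_smul_of_nonneg hC]
  refine le_csInf (Set.Nonempty.smul_set ⟨_, P.prod Q, isCoupling_prod P Q, rfl⟩) ?_
  rintro _ ⟨_, ⟨π, hπ, rfl⟩, rfl⟩
  exact h π hπ

theorem wass_map_le_of_lipschitzOn {P Q : Measure (ι → ℝ)} [IsProbabilityMeasure P]
    [IsProbabilityMeasure Q] (hP : Integrable l1norm P) (hQ : Integrable l1norm Q)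
    {S : Set (ι → ℝ)} (hPS : ∀ᵐ w ∂P, w ∈ S) (hQS : ∀ᵐ w ∂Q, w ∈ S)
    {f : (ι → ℝ) → (κ → ℝ)} (hf : Measurable f) {C : ℝ} (hC : 0 ≤ C)
    (hLip : ∀ x ∈ S, ∀ y ∈ S, l1norm (f x - f y) ≤ C * l1norm (x - y)) :
    wass (P.map f) (Q.map f) ≤ C * wass P Q := by
  refine le_mul_wass hC fun π hπ => ?_
  have hS : ∀ᵐ q ∂π, q.1 ∈ S ∧ q.2 ∈ S := by
    obtain ⟨-, hfst, hsnd⟩ := hπ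
    subst hfst hsnd
    filter_upwards [ae_of_ae_map measurable_fst.aemeasurable hPS,
      ae_of_ae_map measurable_snd.aemeasurable hQS] with q h1 h2 using ⟨h1, h2⟩
  calc wass (P.map f) (Q.map f)
      ≤ ∫ q, l1norm (q.1 - q.2) ∂(π.map (Prod.map f f)) := wass_le_integral (hπ.map hf hf)
    _ = ∫ q, l1norm (f q.1 - f q.2) ∂π :=
        integral_map (hf.prodMap hf).aemeasurable
          (continuous_l1norm.comp (continuous_fst.sub continuous_snd)).aestronglyMeasurable
    _ ≤ ∫ q, C * l1norm (q.1 - q.2) ∂π :=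
        integral_mono_of_nonneg (Filter.Eventually.of_forall fun q => l1norm_nonneg _)
          ((hπ.integrable_cost hP hQ).const_mul C)
          (hS.mono fun q hq => hLip _ hq.1 _ hq.2)
    _ = C * ∫ q, l1norm (q.1 - q.2) ∂π := integral_const_mul C _

end Wasserstein

theorem stmt8_general {n T : ℕ} {p : Type*} [Fintype p]
    (x0 : Fin n → ℝ)
    (P Q : Measure ((Fin (T+1) × Fin n) → ℝ))
    [IsProbabilityMeasure P] [IsProbabilityMeasure Q]
    (hPmom : Integrable (fun v => l1norm v) P) (hQmom : Integrable (fun v => l1norm v) Q)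
    (hPsupp : ∀ᵐ w ∂P, ∀ j, w (0, j) = x0 j)
    (hQsupp : ∀ᵐ w ∂Q, ∀ j, w (0, j) = x0 j)
    (M : Matrix p (Fin (T+1) × Fin n) ℝ) :
    wass (P.map (fun v => M *ᵥ v)) (Q.map (fun v => M *ᵥ v))
      ≤ matL1 (M * dshift T n) * wass P Q := by
  refine wass_map_le_of_lipschitzOn hPmom hQmom hPsupp hQsupp
    (continuous_const.matrix_mulVec continuous_id).measurable (matL1_nonneg _) ?_
  intro w₁ hw₁ w₂ hw₂
  rw [← mulVec_sub]
  exact l1norm_mulVec_le_matL1_mul_dshift M _ fun k => by simp [hw₁ k, hw₂ k]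

/-- **Lemma 2, disturbance distribution uncertainty.** If `P, Q` are both
supported on the affine set of vectors whose first `n` coordinates equal `x₀`, then for any
matrix `M` (in particular `M = R_Φ Φ`), `d_W(M#P, M#Q) ≤ ‖MZ‖ d_W(P, Q)`. -/
theorem stmt8 {n T : ℕ} {p : Type*} [Fintype p] (hn : 0 < n) (hT : 0 < T)
    (x0 : Fin n → ℝ)
    (P Q : Measure ((Fin (T+1) × Fin n) → ℝ))
    [IsProbabilityMeasure P] [IsProbabilityMeasure Q]
    (hPmom : Integrable (fun v => l1norm v) P) (hQmom : Integrable (fun v => l1norm v) Q)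
    (hPsupp : ∀ᵐ w ∂P, ∀ j, w (0, j) = x0 j)
    (hQsupp : ∀ᵐ w ∂Q, ∀ j, w (0, j) = x0 j)
    (M : Matrix p (Fin (T+1) × Fin n) ℝ) :
    wass (P.map (fun v => M *ᵥ v)) (Q.map (fun v => M *ᵥ v))
      ≤ matL1 (M * dshift T n) * wass P Q :=
  stmt8_general x0 P Q hPmom hQmom hPsupp hQsupp M
end
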